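/- If I_1, I_2 ⊆ R = ℂ[x_1,…,x_N] are ideals generated by homogeneous polynomials, then for every d ∈ ℕ the truncated dual spaces satisfy D_0^d[I_1 ∩ I_2] = D_0^d[I_1] + D_0^d[I_2] (sum of ℂ-subspaces). -/

import Mathlib

/-!
A functional `q` of order `≤ d` only sees the homogeneous components of degree `≤ d` of a
polynomial, and a homogeneous ideal contains the homogeneous components of its elements. Hence
`D_0^d[I]` is the annihilator of `I ∩ W_d`, where `W_d` is the finite-dimensional space of
polynomials of degree `≤ d`, under the coefficient pairing, which is perfect on `W_d`. In finite
dimension the annihilator of an intersection is the sum of the annihilators.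
-/

open MvPolynomial

noncomputable section

/-- The polynomial ring `R = ℂ[x_1,…,x_N]`, with variables indexed by `Fin N`. -/
abbrev PolyR (N : ℕ) := MvPolynomial (Fin N) ℂ

/-- A dual functional `q = Σ_α c_α ∂^α` is encoded by its coefficient vector, i.e.
by an element of `MvPolynomial (Fin N) ℂ` (which is exactly the space of finitely
supported functions `ℕ^N →₀ ℂ`).  Its application to a polynomial `f` is
`q(f) = Σ_α c_α · (coefficient of x^α in f)`. -/
def dapply {N : ℕ} (q f : PolyR N) : ℂ := ∑ α ∈ f.support, q.coeff α * f.coeff α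

/-- The Macaulay dual space `D_0[I]` of an ideal `I`, as a `ℂ`-subspace of `D_0`. -/
def dualSpace {N : ℕ} (I : Ideal (PolyR N)) : Submodule ℂ (PolyR N) where
  carrier := {q | ∀ f ∈ I, dapply q f = 0}
  zero_mem' := by intro f _; simp [dapply]
  add_mem' := by
    intro a b ha hb f hf
    have h : dapply (a + b) f = dapply a f + dapply b f := by
      simp [dapply, MvPolynomial.coeff_add, add_mul, Finset.sum_add_distrib]
    rw [h, ha f hf, hb f hf, add_zero]
  smul_mem' := by
    intro c q hq f hf
    have h : dapply (c • q) f = c * dapply q f := by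
      simp [dapply, MvPolynomial.coeff_smul, Finset.mul_sum, mul_assoc]
    rw [h, hq f hf, mul_zero]

/-- The subspace of dual functionals all of whose exponents satisfy `P`. -/
def expSupported {N : ℕ} (P : (Fin N →₀ ℕ) → Prop) : Submodule ℂ (PolyR N) where
  carrier := {q | ∀ α ∈ q.support, P α}
  zero_mem' := by simp
  add_mem' := by
    intro a b ha hb α hα
    rcases Finset.mem_union.mp (MvPolynomial.support_add hα) with h | h
    · exact ha α h
    · exact hb α h
  smul_mem' := by
    intro c q hq α hα
    exact hq α (MvPolynomial.support_smul hα)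

/-- The truncated dual space `D_0^k[I]`: functionals in `D_0[I]` of order at most `k`
(in particular `0` belongs to it). -/
def truncDual {N : ℕ} (I : Ideal (PolyR N)) (k : ℕ) : Submodule ℂ (PolyR N) :=
  dualSpace I ⊓ expSupported (fun α => ∑ i, α i ≤ k)

/-- The eliminating truncated dual space `E_0^d[I, A]`, where the set of variables `A`
is given by a finite set of indices: functionals in `D_0[I]` with `ord_A ≤ d`. -/
def elimDual {N : ℕ} (I : Ideal (PolyR N)) (A : Finset (Fin N)) (d : ℕ) :
    Submodule ℂ (PolyR N) :=
  dualSpace I ⊓ expSupported (fun α => ∑ i ∈ A, α i ≤ d)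

open scoped Classical in
/-- The action `g · q` of the polynomial ring on dual functionals, determined by
`(g·q)(f) = q(g·f)`; concretely `g · ∂^α = Σ_{γ ≤ α} g_γ ∂^{α-γ}`. -/
def dmul {N : ℕ} (g q : PolyR N) : PolyR N :=
  ∑ γ ∈ g.support, ∑ α ∈ q.support,
    if γ ≤ α then (MvPolynomial.monomial (α - γ)) (g.coeff γ * q.coeff α) else 0

/-- The maximal ideal `m = ⟨x_1,…,x_N⟩` of the origin. -/
def mIdeal (N : ℕ) : Ideal (PolyR N) := Ideal.span (Set.range MvPolynomial.X)

/-- The multiplicative set of polynomials not vanishing at the origin. -/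
def atOrigin (N : ℕ) : Submonoid (PolyR N) where
  carrier := {g | MvPolynomial.constantCoeff g ≠ 0}
  one_mem' := by simp
  mul_mem' := by
    intro a b ha hb
    simp only [Set.mem_setOf_eq, map_mul]
    exact mul_ne_zero ha hb

/-- The local ring `R_0` of the origin: the localization of `R` at the maximal ideal
of the origin. -/
abbrev LocR (N : ℕ) := Localization (atOrigin N)

/-- The extension `I·R_0` of an ideal `I ⊆ R` to the local ring of the origin. -/
def extIdeal {N : ℕ} (I : Ideal (PolyR N)) : Ideal (LocR N) :=
  Ideal.map (algebraMap (PolyR N) (LocR N)) I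

/-- The contraction `I·R_0 ∩ R` of the extension of `I` back to `R`. -/
def contExt {N : ℕ} (I : Ideal (PolyR N)) : Ideal (PolyR N) :=
  Ideal.comap (algebraMap (PolyR N) (LocR N)) (extIdeal I)

/-- The local Hilbert function
`H_I(k) = dim_ℂ R/(I + m^{k+1}) − dim_ℂ R/(I + m^k)`
(note that for `k = 0` the subtrahend vanishes since `m^0 = R`). -/
def hilb {N : ℕ} (I : Ideal (PolyR N)) (k : ℕ) : ℕ :=
  Module.finrank ℂ (PolyR N ⧸ (I + mIdeal N ^ (k + 1)))
    - Module.finrank ℂ (PolyR N ⧸ (I + mIdeal N ^ k))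

open Submodule

section Duality

variable {K W : Type*} [Field K] [AddCommGroup W] [Module K W] [FiniteDimensional K W]

theorem comap_dualAnnihilator_inf_of_injective (Φ : W →ₗ[K] Module.Dual K W)
    (hΦ : Function.Injective Φ) (U U' : Submodule K W) :
    (U ⊓ U').dualAnnihilator.comap Φ =
      U.dualAnnihilator.comap Φ ⊔ U'.dualAnnihilator.comap Φ := by
  let e := Φ.linearEquivOfInjective hΦ Subspace.dual_finrank_eq.symm
  have he : (e : W →ₗ[K] Module.Dual K W) = Φ := rfl
  rw [← he, comap_equiv_eq_map_symm, comap_equiv_eq_map_symm, comap_equiv_eq_map_symm,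
    Subspace.dualAnnihilator_inf_eq, Submodule.map_sup]

end Duality

attribute [local instance] MvPolynomial.gradedAlgebra

theorem isHomogeneous_span_of_isHomogeneous {σ R : Type*} [CommSemiring R]
    {G : Set (MvPolynomial σ R)} (hG : ∀ g ∈ G, ∃ k, g.IsHomogeneous k) :
    (Ideal.span G).IsHomogeneous (homogeneousSubmodule σ R) :=
  Ideal.homogeneous_span _ _ fun g hg => (hG g hg).imp fun k hk =>
    (mem_homogeneousSubmodule k g).2 hk

variable {N : ℕ}

theorem dapply_eq_sum_of_support_subset (q f : PolyR N) {s : Finset (Fin N →₀ ℕ)}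
    (h : f.support ⊆ s) : dapply q f = ∑ α ∈ s, q.coeff α * f.coeff α :=
  Finset.sum_subset h fun α _ hα => by rw [notMem_support_iff.mp hα, mul_zero]

theorem dapply_comm (q f : PolyR N) : dapply q f = dapply f q := by
  rw [dapply_eq_sum_of_support_subset q f (s := f.support ∪ q.support) Finset.subset_union_left,
    dapply_eq_sum_of_support_subset f q (s := f.support ∪ q.support) Finset.subset_union_right]
  simp_rw [mul_comm]

theorem dapply_eq_sum_support_left (q f : PolyR N) :
    dapply q f = ∑ α ∈ q.support, q.coeff α * f.coeff α := by
  rw [dapply_comm, dapply]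
  simp_rw [mul_comm]

theorem dapply_add_left (a b f : PolyR N) : dapply (a + b) f = dapply a f + dapply b f := by
  simp [dapply, add_mul, Finset.sum_add_distrib]

theorem dapply_smul_left (c : ℂ) (q f : PolyR N) : dapply (c • q) f = c * dapply q f := by
  simp [dapply, Finset.mul_sum, mul_assoc]

theorem dapply_monomial_one (q : PolyR N) (α : Fin N →₀ ℕ) :
    dapply q (monomial α 1) = q.coeff α := by
  simp [dapply, support_monomial]

variable (N) in
def dapplyBilin : PolyR N →ₗ[ℂ] PolyR N →ₗ[ℂ] ℂ :=
  LinearMap.mk₂ ℂ dapply dapply_add_left dapply_smul_left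
    (fun q f g => by rw [dapply_comm, dapply_add_left, dapply_comm f, dapply_comm g])
    (fun c q f => by rw [dapply_comm, dapply_smul_left, dapply_comm f, smul_eq_mul])

variable (N) in
def orderLE (d : ℕ) : Submodule ℂ (PolyR N) :=
  expSupported fun α => ∑ i, α i ≤ d

variable {d : ℕ}

instance : FiniteDimensional ℂ (orderLE N d) :=
  Submodule.finiteDimensional_of_le (S₂ := restrictTotalDegree (Fin N) ℂ d) fun _ hq =>
    (mem_restrictTotalDegree _ _ _).2 <| Finset.sup_le fun α hα =>
      (Finsupp.sum_fintype α _ fun _ => rfl).trans_le (hq α hα)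

theorem monomial_mem_orderLE {α : Fin N →₀ ℕ} (h : ∑ i, α i ≤ d) (c : ℂ) :
    monomial α c ∈ orderLE N d := fun β hβ => by
  rwa [Finset.mem_singleton.mp (support_monomial_subset hβ)]

theorem homogeneousComponent_mem_orderLE {k : ℕ} (hk : k ≤ d) (f : PolyR N) :
    homogeneousComponent k f ∈ orderLE N d := fun α hα => by
  rw [mem_support_iff, coeff_homogeneousComponent] at hα
  rw [← Finsupp.degree_eq_sum]
  split_ifs at hα with h
  · exact h ▸ hk
  · exact absurd rfl hα

variable (N d) in
def orderLEPairing : orderLE N d →ₗ[ℂ] Module.Dual ℂ (orderLE N d) :=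
  (dapplyBilin N).compl₁₂ (orderLE N d).subtype (orderLE N d).subtype

theorem orderLEPairing_apply (q f : orderLE N d) :
    orderLEPairing N d q f = dapply (q : PolyR N) f := rfl

theorem orderLEPairing_injective : Function.Injective (orderLEPairing N d) := by
  rw [← LinearMap.ker_eq_bot, LinearMap.ker_eq_bot']
  intro q hq
  ext α
  by_cases hα : α ∈ (q : PolyR N).support
  · have h := LinearMap.congr_fun hq ⟨monomial α 1, monomial_mem_orderLE (q.2 α hα) 1⟩
    rwa [orderLEPairing_apply, dapply_monomial_one] at h
  · exact notMem_support_iff.mp hα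

theorem dapply_eq_sum_homogeneousComponent {q : PolyR N} (hq : q ∈ orderLE N d) (f : PolyR N) :
    dapply q f = ∑ k ∈ Finset.range (d + 1), dapply q (homogeneousComponent k f) := by
  simp only [dapply_eq_sum_support_left, coeff_homogeneousComponent, mul_ite, mul_zero]
  rw [Finset.sum_comm]
  refine Finset.sum_congr rfl fun α hα => ?_
  rw [Finset.sum_ite_eq,
    if_pos (Finset.mem_range_succ_iff.2 ((Finsupp.degree_eq_sum α).trans_le (hq α hα)))]

theorem truncDual_eq_map_comap_dualAnnihilator {I : Ideal (PolyR N)}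
    (hI : I.IsHomogeneous (homogeneousSubmodule (Fin N) ℂ)) :
    truncDual I d = (((I.restrictScalars ℂ).comap (orderLE N d).subtype).dualAnnihilator.comap
      (orderLEPairing N d)).map (orderLE N d).subtype := by
  ext q
  simp only [truncDual, mem_inf, mem_map, mem_comap, mem_dualAnnihilator, subtype_apply]
  constructor
  · rintro ⟨hqI, hqW⟩
    exact ⟨⟨q, hqW⟩, fun f hf => hqI f hf, rfl⟩
  · rintro ⟨⟨q, hqW⟩, hann, rfl⟩
    refine ⟨fun f hf => ?_, hqW⟩
    rw [dapply_eq_sum_homogeneousComponent hqW]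
    refine Finset.sum_eq_zero fun k hk => hann
      ⟨_, homogeneousComponent_mem_orderLE (Finset.mem_range_succ_iff.1 hk) f⟩ ?_
    exact homogeneousComponent_mem_of_mem hI hf k

theorem statement8_general {N : ℕ} (I₁ I₂ : Ideal (PolyR N))
    (h₁ : ∃ G : Set (PolyR N), (∀ g ∈ G, ∃ k, MvPolynomial.IsHomogeneous g k) ∧
      Ideal.span G = I₁)
    (h₂ : ∃ G : Set (PolyR N), (∀ g ∈ G, ∃ k, MvPolynomial.IsHomogeneous g k) ∧
      Ideal.span G = I₂)
    (d : ℕ) :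
    truncDual (I₁ ⊓ I₂) d = truncDual I₁ d ⊔ truncDual I₂ d := by
  obtain ⟨G₁, hG₁, rfl⟩ := h₁
  obtain ⟨G₂, hG₂, rfl⟩ := h₂
  have hom₁ := isHomogeneous_span_of_isHomogeneous hG₁
  have hom₂ := isHomogeneous_span_of_isHomogeneous hG₂
  rw [truncDual_eq_map_comap_dualAnnihilator (hom₁.inf hom₂),
    truncDual_eq_map_comap_dualAnnihilator hom₁, truncDual_eq_map_comap_dualAnnihilator hom₂,
    restrictScalars_inf, comap_inf,
    comap_dualAnnihilator_inf_of_injective _ orderLEPairing_injective, Submodule.map_sup]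

/-- If `I₁, I₂` are generated by homogeneous polynomials, then for
every `d`, `D_0^d[I₁ ∩ I₂] = D_0^d[I₁] + D_0^d[I₂]`. -/
theorem statement8 {N : ℕ} (hN : 1 ≤ N) (I₁ I₂ : Ideal (PolyR N))
    (h₁ : ∃ G : Set (PolyR N), (∀ g ∈ G, ∃ k, MvPolynomial.IsHomogeneous g k) ∧
      Ideal.span G = I₁)
    (h₂ : ∃ G : Set (PolyR N), (∀ g ∈ G, ∃ k, MvPolynomial.IsHomogeneous g k) ∧
      Ideal.span G = I₂)
    (d : ℕ) :
    truncDual (I₁ ⊓ I₂) d = truncDual I₁ d ⊔ truncDual I₂ d :=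
  statement8_general I₁ I₂ h₁ h₂ d
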